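/- The Cholesky factorization map is continuous on positive definite matrices: if Pₖ is a sequence of n×n Hermitian positive definite matrices converging to a positive definite matrix P, and Lₖ (resp. L) denotes the unique lower-triangular matrix with positive real diagonal entries such that Pₖ = LₖLₖ* (resp. P = LL*), then Lₖ → L. -/

import Mathlib

open scoped ComplexOrder Matrix

/-- `L` is lower triangular with strictly positive real diagonal entries. -/
def IsCholeskyFactor {n : ℕ} (L : Matrix (Fin n) (Fin n) ℂ) : Prop :=
  (∀ i j : Fin n, i < j → L i j = 0) ∧
    ∀ i : Fin n, 0 < (L i i).re ∧ (L i i).im = 0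

namespace CholAux

variable {n : ℕ}

lemma lowerTri {L : Matrix (Fin n) (Fin n) ℂ} (h : ∀ i j : Fin n, i < j → L i j = 0) :
    L.BlockTriangular OrderDual.toDual := fun i j hij => h i j hij

lemma upperTriH {L : Matrix (Fin n) (Fin n) ℂ} (h : ∀ i j : Fin n, i < j → L i j = 0) :
    Lᴴ.BlockTriangular id := by
  intro i j hij
  simp [Matrix.conjTranspose_apply, h j i hij]

lemma det_chol {L : Matrix (Fin n) (Fin n) ℂ} (hL : IsCholeskyFactor L) : L.det ≠ 0 := by
  rw [Matrix.det_of_lowerTriangular L (lowerTri hL.1)]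
  exact Finset.prod_ne_zero_iff.2 fun i _ => by
    intro h
    have := (hL.2 i).1
    rw [h] at this
    simp at this

lemma cholesky_unique {L₁ L₂ : Matrix (Fin n) (Fin n) ℂ}
    (h₁ : IsCholeskyFactor L₁) (h₂ : IsCholeskyFactor L₂)
    (h : L₁ * L₁ᴴ = L₂ * L₂ᴴ) : L₁ = L₂ := by
  have hd₁ : IsUnit L₁.det := (det_chol h₁).isUnit
  have hd₂ : IsUnit L₂.det := (det_chol h₂).isUnit
  have hd₁' : IsUnit (L₁ᴴ).det := by simpa [Matrix.det_conjTranspose] using hd₁.star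
  have hd₂' : IsUnit (L₂ᴴ).det := by simpa [Matrix.det_conjTranspose] using hd₂.star
  set D := L₂⁻¹ * L₁ with hD
  haveI : Invertible L₂ := L₂.invertibleOfIsUnitDet hd₂
  have hDlow : D.BlockTriangular OrderDual.toDual :=
    (Matrix.blockTriangular_inv_of_blockTriangular (lowerTri h₂.1)).mul (lowerTri h₁.1)
  have hDeq : D = L₂ᴴ * (L₁ᴴ)⁻¹ := by
    have h' : L₂⁻¹ * (L₁ * L₁ᴴ) * (L₁ᴴ)⁻¹ = L₂⁻¹ * (L₂ * L₂ᴴ) * (L₁ᴴ)⁻¹ := by rw [h]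
    calc D = L₂⁻¹ * (L₁ * L₁ᴴ) * (L₁ᴴ)⁻¹ := by
            rw [Matrix.mul_assoc, Matrix.mul_assoc, Matrix.mul_nonsing_inv _ hd₁', Matrix.mul_one]
      _ = L₂⁻¹ * (L₂ * L₂ᴴ) * (L₁ᴴ)⁻¹ := h'
      _ = L₂ᴴ * (L₁ᴴ)⁻¹ := by
            rw [← Matrix.mul_assoc, Matrix.nonsing_inv_mul _ hd₂, Matrix.one_mul]
  haveI : Invertible L₁ᴴ := (L₁ᴴ).invertibleOfIsUnitDet hd₁'
  have hDup : D.BlockTriangular id := by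
    rw [hDeq]
    exact (upperTriH h₂.1).mul (Matrix.blockTriangular_inv_of_blockTriangular (upperTriH h₁.1))
  have hDdiag : ∀ i j : Fin n, i ≠ j → D i j = 0 := by
    intro i j hij
    rcases lt_or_gt_of_ne hij with hlt | hgt
    · exact hDlow hlt
    · exact hDup hgt
  have hL₁eq : L₁ = L₂ * D := by
    rw [hD, ← Matrix.mul_assoc, Matrix.mul_nonsing_inv _ hd₂, Matrix.one_mul]
  have hDD : D * Dᴴ = 1 := by
    have key : L₂ * (D * Dᴴ) * L₂ᴴ = L₂ * L₂ᴴ := by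
      calc L₂ * (D * Dᴴ) * L₂ᴴ = (L₂ * D) * (L₂ * D)ᴴ := by
            simp only [Matrix.conjTranspose_mul, Matrix.mul_assoc]
        _ = L₁ * L₁ᴴ := by rw [← hL₁eq]
        _ = L₂ * L₂ᴴ := h
    have h5 := congrArg (fun M => L₂⁻¹ * M * (L₂ᴴ)⁻¹) key
    simp only [Matrix.mul_assoc] at h5
    rw [Matrix.mul_nonsing_inv _ hd₂'] at h5
    simp only [Matrix.mul_one] at h5
    simp only [← Matrix.mul_assoc] at h5
    rwa [Matrix.nonsing_inv_mul _ hd₂, Matrix.one_mul] at h5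
  have hDone : ∀ i, D i i = 1 := by
    intro i
    have h1 : (D * Dᴴ) i i = 1 := by rw [hDD]; simp
    have h2 : (D * Dᴴ) i i = D i i * star (D i i) := by
      rw [Matrix.mul_apply, Finset.sum_eq_single i]
      · simp [Matrix.conjTranspose_apply]
      · intro j _ hj
        rw [hDdiag i j (Ne.symm hj)]; simp
      · simp
    have hnorm : Complex.normSq (D i i) = 1 := by
      have h3 : D i i * star (D i i) = (Complex.normSq (D i i) : ℂ) := by
        rw [Complex.star_def]; exact Complex.mul_conj _
      have h4 : (Complex.normSq (D i i) : ℂ) = 1 := by rw [← h3, ← h2, h1]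
      exact_mod_cast h4
    have hL2ne : L₂ i i ≠ 0 := fun h0 => by
      have := (h₂.2 i).1; rw [h0] at this; simp at this
    have hdiag : L₁ i i = L₂ i i * D i i := by
      have h6 : L₁ i i = (L₂ * D) i i := congrFun (congrFun hL₁eq i) i
      rw [h6, Matrix.mul_apply, Finset.sum_eq_single i]
      · intro j _ hj
        rw [hDdiag j i hj]; simp
      · simp
    have him : (D i i).im = 0 := by
      have ha := (h₁.2 i); have hb := (h₂.2 i)
      have h7 : (L₂ i i * D i i).im = 0 := hdiag ▸ ha.2
      rw [Complex.mul_im, hb.2] at h7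
      simp only [zero_mul, add_zero] at h7
      rcases mul_eq_zero.1 h7 with h | h
      · exact absurd h hb.1.ne'
      · exact h
    have hre : (D i i).re = 1 := by
      have ha := (h₁.2 i); have hb := (h₂.2 i)
      have h8 : 0 < (L₂ i i * D i i).re := hdiag ▸ ha.1
      rw [Complex.mul_re, hb.2, him] at h8
      simp only [mul_zero, sub_zero] at h8
      have hpos : 0 < (D i i).re := by nlinarith [hb.1]
      have h9 : (D i i).re * (D i i).re = 1 := by
        have := hnorm
        rw [Complex.normSq_apply, him] at this
        linarith
      nlinarith
    exact Complex.ext hre him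
  have hDeq1 : D = 1 := by
    ext i j
    by_cases hij : i = j
    · subst hij; rw [hDone i]; simp
    · rw [hDdiag i j hij]; simp [Matrix.one_apply_ne hij]
  rw [hL₁eq, hDeq1, Matrix.mul_one]

lemma diag_re {M : Matrix (Fin n) (Fin n) ℂ} (i : Fin n) :
    ((M * Mᴴ) i i).re = ∑ j, ‖M i j‖ ^ 2 := by
  rw [Matrix.mul_apply, Complex.re_sum]
  refine Finset.sum_congr rfl fun j _ => ?_
  rw [Matrix.conjTranspose_apply, Complex.star_def, Complex.mul_conj]
  rw [Complex.ofReal_re, ← Complex.sq_norm]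

end CholAux

open CholAux Filter

theorem cholesky_continuous (n : ℕ)
    (P : ℕ → Matrix (Fin n) (Fin n) ℂ) (Plim : Matrix (Fin n) (Fin n) ℂ)
    (hP : ∀ k, (P k).PosDef) (hPlim : Plim.PosDef)
    (hconv : Filter.Tendsto P Filter.atTop (nhds Plim))
    (L : ℕ → Matrix (Fin n) (Fin n) ℂ) (Llim : Matrix (Fin n) (Fin n) ℂ)
    (hL : ∀ k, IsCholeskyFactor (L k) ∧ P k = L k * (L k)ᴴ)
    (hLlim : IsCholeskyFactor Llim ∧ Plim = Llim * Llimᴴ) :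
    Filter.Tendsto L Filter.atTop (nhds Llim) := by
  letI instN : NormedAddCommGroup (Matrix (Fin n) (Fin n) ℂ) := Matrix.normedAddCommGroup
  letI instS : NormedSpace ℂ (Matrix (Fin n) (Fin n) ℂ) := Matrix.normedSpace
  haveI : ProperSpace (Matrix (Fin n) (Fin n) ℂ) := FiniteDimensional.proper ℂ _
  -- bound on P
  obtain ⟨C, hC⟩ : ∃ C : ℝ, ∀ k, ‖P k‖ ≤ C := by
    obtain ⟨C, hC⟩ := (hconv.norm.bddAbove_range)
    exact ⟨C, fun k => hC ⟨k, rfl⟩⟩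
  have hCpos : 0 ≤ C := le_trans (norm_nonneg _) (hC 0)
  -- bound on L
  have hLb : ∀ k, ‖L k‖ ≤ Real.sqrt C := by
    intro k
    rw [Matrix.norm_le_iff (Real.sqrt_nonneg C)]
    intro i j
    have hsum : ∑ j', ‖L k i j'‖ ^ 2 = ((P k) i i).re := by
      rw [(hL k).2, diag_re]
    have hle : ‖L k i j‖ ^ 2 ≤ C := by
      have h1 : ‖L k i j‖ ^ 2 ≤ ∑ j', ‖L k i j'‖ ^ 2 :=
        Finset.single_le_sum (f := fun j' => ‖L k i j'‖ ^ 2)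
          (fun _ _ => sq_nonneg _) (Finset.mem_univ j)
      have h2 : ((P k) i i).re ≤ ‖(P k) i i‖ := Complex.re_le_norm _
      have h3 : ‖(P k) i i‖ ≤ ‖P k‖ := Matrix.norm_entry_le_entrywise_sup_norm _
      linarith [hC k, hsum ▸ h1]
    exact (Real.le_sqrt (norm_nonneg _) hCpos).2 hle
  apply tendsto_of_subseq_tendsto
  intro ns hns
  have hmem : ∀ k, L (ns k) ∈ Metric.closedBall (0 : Matrix (Fin n) (Fin n) ℂ) (Real.sqrt C) := by
    intro k
    rw [Metric.mem_closedBall, dist_zero_right]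
    exact hLb (ns k)
  obtain ⟨x, -, ms, hms, hconvx⟩ :=
    (isCompact_closedBall (0 : Matrix (Fin n) (Fin n) ℂ) (Real.sqrt C)).tendsto_subseq hmem
  refine ⟨ms, ?_⟩
  -- entrywise convergence
  have hentry : ∀ i j : Fin n, Tendsto (fun k => L (ns (ms k)) i j) atTop (nhds (x i j)) := by
    intro i j
    have hcont : Continuous fun M : Matrix (Fin n) (Fin n) ℂ => M i j :=
      (continuous_apply j).comp (continuous_apply i)
    exact (hcont.tendsto x).comp hconvx
  -- x * xᴴ = Plim
  have hPsub : Tendsto (fun k => P (ns (ms k))) atTop (nhds Plim) :=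
    hconv.comp (hns.comp hms.tendsto_atTop)
  have hmulcont : Continuous fun M : Matrix (Fin n) (Fin n) ℂ => M * Mᴴ :=
    continuous_id.matrix_mul continuous_id.matrix_conjTranspose
  have hxx : Plim = x * xᴴ := by
    have h1 : Tendsto (fun k => L (ns (ms k)) * (L (ns (ms k)))ᴴ) atTop (nhds (x * xᴴ)) :=
      (hmulcont.tendsto x).comp hconvx
    have h2 : (fun k => L (ns (ms k)) * (L (ns (ms k)))ᴴ) = fun k => P (ns (ms k)) := by
      funext k; exact ((hL (ns (ms k))).2).symm
    rw [h2] at h1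
    exact tendsto_nhds_unique hPsub h1
  -- x is lower triangular
  have hxlow : ∀ i j : Fin n, i < j → x i j = 0 := by
    intro i j hij
    have h1 : (fun k => L (ns (ms k)) i j) = fun _ => (0 : ℂ) := by
      funext k; exact (hL (ns (ms k))).1.1 i j hij
    have := hentry i j
    rw [h1] at this
    exact tendsto_nhds_unique this tendsto_const_nhds
  -- diagonal: im = 0
  have hxim : ∀ i : Fin n, (x i i).im = 0 := by
    intro i
    have h1 : Tendsto (fun k => (L (ns (ms k)) i i).im) atTop (nhds ((x i i).im)) :=
      (Complex.continuous_im.tendsto _).comp (hentry i i)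
    have h2 : (fun k => (L (ns (ms k)) i i).im) = fun _ => (0 : ℝ) := by
      funext k; exact ((hL (ns (ms k))).1.2 i).2
    rw [h2] at h1
    exact tendsto_nhds_unique h1 tendsto_const_nhds
  -- diagonal: re ≥ 0, then > 0 using det ≠ 0
  have hxrenn : ∀ i : Fin n, 0 ≤ (x i i).re := by
    intro i
    have h1 : Tendsto (fun k => (L (ns (ms k)) i i).re) atTop (nhds ((x i i).re)) :=
      (Complex.continuous_re.tendsto _).comp (hentry i i)
    exact ge_of_tendsto' h1 fun k => ((hL (ns (ms k))).1.2 i).1.le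
  have hxdet : x.det ≠ 0 := by
    intro h0
    have hdet : Plim.det = x.det * (xᴴ).det := by rw [hxx, Matrix.det_mul]
    have : Plim.det = 0 := by rw [hdet, h0, zero_mul]
    exact hPlim.det_pos.ne' this
  have hxdiagne : ∀ i : Fin n, x i i ≠ 0 := by
    intro i h0
    rw [Matrix.det_of_lowerTriangular x (lowerTri hxlow)] at hxdet
    exact hxdet (Finset.prod_eq_zero (Finset.mem_univ i) h0)
  have hxchol : IsCholeskyFactor x := by
    refine ⟨hxlow, fun i => ⟨?_, hxim i⟩⟩
    rcases lt_or_eq_of_le (hxrenn i) with h | h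
    · exact h
    · exact absurd (Complex.ext h.symm (hxim i)) (hxdiagne i)
  have hxL : x = Llim :=
    cholesky_unique hxchol hLlim.1 (by rw [← hxx, hLlim.2])
  rw [← hxL]
  exact hconvx
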